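/- arXiv:2205.07775 — 8 statements merged into one kernel-verified Lean document; each statement's English description precedes it below -/
import Mathlib

section
/- Trudinger–Moser type inequality on finite graphs: for any α > 0 there exists a constant C depending only on α and the finite connected graph G such that ∫_V e^{α u²} dμ ≤ C for all u : V → ℝ with ∫_V |∇u|² dμ ≤ 1 and ∫_V u dμ = 0. -/
/-! Each edge carries at most the whole energy, so an edge of weight `w` changes `u` by at most
`√(2 / w)`. Connectivity of the finite graph then bounds the oscillation of `u` by a constant of
the graph, and since `u` has mean zero it takes values of both signs, so `|u|` is bounded by the
oscillation. Hence `e^{α u²}` is bounded pointwise, uniformly in `u`. -/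

open Finset Real

namespace Relation.ReflTransGen

variable {V : Type*} {R : V → V → Prop}

theorem exists_abs_sub_le_mul {x y : V} (h : ReflTransGen R x y) :
    ∃ n : ℕ, ∀ (u : V → ℝ) (s : ℝ), (∀ a b, R a b → |u b - u a| ≤ s) →
      |u y - u x| ≤ n * s := by
  induction h with
  | refl => exact ⟨0, fun u s _ => by simp⟩
  | @tail b c _ hbc ih =>
    obtain ⟨n, hn⟩ := ih
    refine ⟨n + 1, fun u s hs => ?_⟩
    calc |u c - u x| ≤ |u c - u b| + |u b - u x| := abs_sub_le _ _ _
      _ ≤ s + n * s := add_le_add (hs b c hbc) (hn u s hs)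
      _ = ↑(n + 1) * s := by push_cast; ring

theorem exists_forall_abs_sub_le_mul [Finite V] (h : ∀ x y, ReflTransGen R x y) :
    ∃ N : ℕ, ∀ (u : V → ℝ) (s : ℝ), 0 ≤ s → (∀ a b, R a b → |u b - u a| ≤ s) →
      ∀ x y, |u y - u x| ≤ N * s := by
  choose n hn using fun p : V × V => (h p.1 p.2).exists_abs_sub_le_mul
  obtain ⟨N, hN⟩ := Finite.exists_le n
  refine ⟨N, fun u s hs hR x y => (hn (x, y) u s hR).trans ?_⟩
  gcongr
  exact hN (x, y)

end Relation.ReflTransGen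

theorem single_le_sum_sum {ι M : Type*} [Fintype ι] [AddCommMonoid M] [PartialOrder M]
    [IsOrderedAddMonoid M] {f : ι → ι → M} (hf : ∀ i j, 0 ≤ f i j) (a b : ι) :
    f a b ≤ ∑ i, ∑ j, f i j :=
  (single_le_sum (fun j _ => hf a j) (mem_univ b)).trans <|
    single_le_sum (fun i _ => sum_nonneg fun j _ => hf i j) (mem_univ a)

section Energy

variable {V : Type*} [Fintype V] {w : V → V → ℝ}

theorem sum_mul_inv_two_mul_mul {μ : V → ℝ} (hμ : ∀ x, μ x ≠ 0) (f : V → ℝ) :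
    ∑ x, μ x * ((2 * μ x)⁻¹ * f x) = (∑ x, f x) / 2 := by
  rw [sum_div]
  refine sum_congr rfl fun x _ => ?_
  field_simp [hμ x]

theorem sq_sub_le_of_energy_le (hw : ∀ x y, 0 ≤ w x y) {u : V → ℝ} {E : ℝ}
    (hE : ∑ x, ∑ y, w x y * (u y - u x) ^ 2 ≤ E) {a b : V} (hab : 0 < w a b) :
    (u b - u a) ^ 2 ≤ E * ∑ x, ∑ y, (w x y)⁻¹ := by
  have hedge : w a b * (u b - u a) ^ 2 ≤ E :=
    (single_le_sum_sum (fun x y => mul_nonneg (hw x y) (sq_nonneg (u y - u x))) a b).trans hE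
  have hE0 : 0 ≤ E := (mul_nonneg hab.le (sq_nonneg _)).trans hedge
  calc (u b - u a) ^ 2 ≤ E * (w a b)⁻¹ := by
        rw [← div_eq_mul_inv, le_div_iff₀ hab, mul_comm]; exact hedge
    _ ≤ E * ∑ x, ∑ y, (w x y)⁻¹ := by
        -- non-edges contribute the junk value `0⁻¹ = 0`, which is harmless here
        gcongr
        exact single_le_sum_sum (fun x y => inv_nonneg.2 (hw x y)) a b

end Energy

theorem abs_le_of_sum_mul_eq_zero {ι : Type*} [Fintype ι] {μ u : ι → ℝ} (hμ : ∀ i, 0 < μ i)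
    (hu : ∑ i, μ i * u i = 0) {K : ℝ} (hK : ∀ i j, |u j - u i| ≤ K) (i : ι) : |u i| ≤ K := by
  have hne : (univ : Finset ι).Nonempty := ⟨i, mem_univ i⟩
  obtain ⟨y, -, hy⟩ := exists_le_of_sum_le hne (f := fun i => μ i * u i) (g := fun _ => 0)
    (by simp [hu])
  obtain ⟨z, -, hz⟩ := exists_le_of_sum_le hne (f := fun _ => 0) (g := fun i => μ i * u i)
    (by simp [hu])
  have hy : u y ≤ 0 := nonpos_of_mul_nonpos_right hy (hμ y)
  have hz : 0 ≤ u z := nonneg_of_mul_nonneg_right hz (hμ z)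
  exact abs_le.2 ⟨by linarith [hK z i, neg_abs_le (u i - u z)],
    by linarith [hK y i, le_abs_self (u i - u y)]⟩

theorem stmt_9_general {V : Type} [Fintype V] (w : V → V → ℝ) (mu : V → ℝ)
    (hnonneg : ∀ x y, 0 ≤ w x y)
    (hmu : ∀ x, 0 < mu x)
    (hconn : ∀ x y : V, Relation.ReflTransGen (fun a b => 0 < w a b) x y)
    (α : ℝ) (hα : 0 < α) :
    ∃ C : ℝ, 0 < C ∧ ∀ u : V → ℝ,
      ∑ x, mu x * ((2 * mu x)⁻¹ * ∑ y, w x y * (u y - u x) ^ 2) ≤ 1 →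
      ∑ x, mu x * u x = 0 →
      ∑ x, mu x * Real.exp (α * (u x) ^ 2) ≤ C := by
  obtain ⟨N, hN⟩ := Relation.ReflTransGen.exists_forall_abs_sub_le_mul hconn
  set s := √(2 * ∑ x, ∑ y, (w x y)⁻¹)
  set K := N * s
  have hsum : 0 ≤ ∑ x, mu x * exp (α * K ^ 2) := sum_nonneg fun x _ => by positivity [hmu x]
  refine ⟨1 + ∑ x, mu x * exp (α * K ^ 2), by linarith, fun u hu hmean => ?_⟩
  rw [sum_mul_inv_two_mul_mul (fun x => (hmu x).ne')] at hu
  have hedge : ∀ a b, 0 < w a b → |u b - u a| ≤ s := fun a b hab =>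
    abs_le_sqrt (sq_sub_le_of_energy_le hnonneg (E := 2) (by linarith) hab)
  have hbound := abs_le_of_sum_mul_eq_zero hmu hmean (hN u s (sqrt_nonneg _) hedge)
  have hsq : ∀ x, u x ^ 2 ≤ K ^ 2 := fun x =>
    sq_le_sq' (abs_le.1 (hbound x)).1 (abs_le.1 (hbound x)).2
  calc ∑ x, mu x * exp (α * u x ^ 2) ≤ ∑ x, mu x * exp (α * K ^ 2) :=
        sum_le_sum fun x _ => mul_le_mul_of_nonneg_left
          (exp_le_exp.2 (mul_le_mul_of_nonneg_left (hsq x) hα.le)) (hmu x).le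
    _ ≤ 1 + ∑ x, mu x * exp (α * K ^ 2) := by linarith

theorem stmt_9 {V : Type} [Fintype V] (w : V → V → ℝ) (mu : V → ℝ)
    (hsymm : ∀ x y, w x y = w y x) (hnonneg : ∀ x y, 0 ≤ w x y)
    (hmu : ∀ x, 0 < mu x)
    (hconn : ∀ x y : V, Relation.ReflTransGen (fun a b => 0 < w a b) x y)
    (α : ℝ) (hα : 0 < α) :
    ∃ C : ℝ, 0 < C ∧ ∀ u : V → ℝ,
      ∑ x, mu x * ((2 * mu x)⁻¹ * ∑ y, w x y * (u y - u x) ^ 2) ≤ 1 →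
      ∑ x, mu x * u x = 0 →
      ∑ x, mu x * Real.exp (α * (u x) ^ 2) ≤ C :=
  stmt_9_general w mu hnonneg hmu hconn α hα
end

section
/- Necessary condition for solvability: if v : V → ℝ solves Δv = -λ e^{g(v₀+v)}(e^{g(v₀+v)} - 1)² + 4πN/|V| on a finite graph (with v₀ + v ≤ 0 pointwise), then λ ≥ 27πN/|V|. -/
open Finset Real

theorem stmt_10 {V : Type} [Fintype V] (w : V → V → ℝ) (mu : V → ℝ)
    (hsymm : ∀ x y, w x y = w y x) (hnonneg : ∀ x y, 0 ≤ w x y)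
    (hmu : ∀ x, 0 < mu x)
    (hconn : ∀ x y : V, Relation.ReflTransGen (fun a b => 0 < w a b) x y)
    (g : ℝ → ℝ)
    (hg : ∀ t ≤ (0:ℝ), 1 + g t - Real.exp (g t) = t)
    (hgneg : ∀ t ≤ (0:ℝ), g t ≤ 0)
    (N : ℕ) (hN : 0 < N) (lam : ℝ) (hlam : 0 < lam)
    (v0 v : V → ℝ) (hneg : ∀ x, v0 x + v x ≤ 0)
    (heq : ∀ x, (mu x)⁻¹ * ∑ y, w x y * (v y - v x) =
      -lam * Real.exp (g (v0 x + v x)) * (Real.exp (g (v0 x + v x)) - 1) ^ 2 +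
        4 * π * N / (∑ z, mu z)) :
    lam ≥ 27 * π * N / (∑ z, mu z) := by
  rcases isEmpty_or_nonempty V with hV | hV
  · simp [Finset.univ_eq_empty]
    positivity
  set M := ∑ z, mu z with hM
  have hMpos : 0 < M := Finset.sum_pos (fun x _ => hmu x) Finset.univ_nonempty
  set E : V → ℝ := fun x => Real.exp (g (v0 x + v x)) with hE
  -- the double sum vanishes
  have hzero : ∑ x, ∑ y, w x y * (v y - v x) = 0 := by
    have h1 : ∑ x, ∑ y, w x y * v y = ∑ x, ∑ y, w x y * v x := by
      rw [Finset.sum_comm]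
      refine Finset.sum_congr rfl fun y _ => Finset.sum_congr rfl fun x _ => ?_
      rw [hsymm]
    simp only [mul_sub, Finset.sum_sub_distrib, h1, sub_self]
  have key : ∀ x, ∑ y, w x y * (v y - v x) =
      mu x * (-lam * E x * (E x - 1) ^ 2 + 4 * π * N / M) := by
    intro x
    have h := heq x
    have hmx : (mu x) ≠ 0 := (hmu x).ne'
    calc ∑ y, w x y * (v y - v x)
        = mu x * ((mu x)⁻¹ * ∑ y, w x y * (v y - v x)) := by
          rw [← mul_assoc, mul_inv_cancel₀ hmx, one_mul]
      _ = mu x * (-lam * E x * (E x - 1) ^ 2 + 4 * π * N / M) := by rw [h]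
  have hsum0 : ∑ x, mu x * (-lam * E x * (E x - 1) ^ 2 + 4 * π * N / M) = 0 := by
    rw [← Finset.sum_congr rfl fun x _ => key x, hzero]
  have hsum : lam * ∑ x, mu x * (E x * (E x - 1) ^ 2) = 4 * π * N := by
    have expand : ∑ x, mu x * (-lam * E x * (E x - 1) ^ 2 + 4 * π * N / M) =
        -(lam * ∑ x, mu x * (E x * (E x - 1) ^ 2)) + M * (4 * π * N / M) := by
      simp only [mul_add]
      rw [Finset.sum_add_distrib]
      congr 1
      · rw [Finset.mul_sum, ← Finset.sum_neg_distrib]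
        exact Finset.sum_congr rfl fun x _ => by ring
      · rw [hM, Finset.sum_mul]
    rw [expand] at hsum0
    have hc : M * (4 * π * N / M) = 4 * π * N := mul_div_cancel₀ _ hMpos.ne'
    linarith
  have hb : ∀ x, E x * (E x - 1) ^ 2 ≤ 4 / 27 := by
    intro x
    have hs0 : 0 < E x := Real.exp_pos _
    have hs1 : E x ≤ 1 := Real.exp_le_one_iff.mpr (hgneg _ (hneg x))
    nlinarith [sq_nonneg (3 * E x - 1), sq_nonneg (E x - 1)]
  have hineq : ∑ x, mu x * (E x * (E x - 1) ^ 2) ≤ (4 / 27) * M := by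
    rw [hM, Finset.mul_sum]
    refine Finset.sum_le_sum fun x _ => ?_
    rw [mul_comm ((4:ℝ)/27) (mu x)]
    exact mul_le_mul_of_nonneg_left (hb x) (hmu x).le
  have hfinal : 4 * π * N ≤ lam * ((4 / 27) * M) := by
    rw [← hsum]
    exact mul_le_mul_of_nonneg_left hineq hlam.le
  rw [ge_iff_le, div_le_iff₀ hMpos]
  nlinarith
end

section
/- Lower bound for the Chern–Simons critical coupling: if u : V → ℝ solves Δu = λ e^u(e^u - 1) + 4π Σ_{j=1}^N δ_{p_j} on a finite weighted graph, then λ ≥ 16πN/|V|. -/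
open Finset Real

theorem stmt_11 {V : Type} [Fintype V] [DecidableEq V] (w : V → V → ℝ) (mu : V → ℝ)
    (hsymm : ∀ x y, w x y = w y x) (hnonneg : ∀ x y, 0 ≤ w x y)
    (hmu : ∀ x, 0 < mu x)
    (N : ℕ) (hN : 0 < N) (p : Fin N → V) (hp : Function.Injective p)
    (lam : ℝ) (hlam : 0 < lam) (u : V → ℝ)
    (heq : ∀ x, (mu x)⁻¹ * ∑ y, w x y * (u y - u x) =
      lam * Real.exp (u x) * (Real.exp (u x) - 1) +
        4 * π * ∑ j, (if x = p j then (mu (p j))⁻¹ else 0)) :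
    lam ≥ 16 * π * N / (∑ z, mu z) := by
  have hne : Nonempty V := ⟨p ⟨0, hN⟩⟩
  have hTpos : 0 < ∑ z, mu z :=
    Finset.sum_pos (fun z _ => hmu z) Finset.univ_nonempty
  set S := ∑ x, mu x * (Real.exp (u x) * (Real.exp (u x) - 1)) with hS
  -- antisymmetry: sum of Laplacians vanishes
  have hlap : ∑ x, mu x * ((mu x)⁻¹ * ∑ y, w x y * (u y - u x)) = 0 := by
    have h1 : ∀ x, mu x * ((mu x)⁻¹ * ∑ y, w x y * (u y - u x))
        = ∑ y, w x y * (u y - u x) := by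
      intro x; rw [← mul_assoc, mul_inv_cancel₀ (hmu x).ne', one_mul]
    simp_rw [h1]
    have h2 : ∑ x, ∑ y, w x y * (u y - u x)
        = ∑ x, ∑ y, w y x * (u x - u y) := Finset.sum_comm
    have h3 : ∑ x, ∑ y, w y x * (u x - u y)
        = -∑ x, ∑ y, w x y * (u y - u x) := by
      rw [← Finset.sum_neg_distrib]
      refine Finset.sum_congr rfl fun x _ => ?_
      rw [← Finset.sum_neg_distrib]
      refine Finset.sum_congr rfl fun y _ => ?_
      rw [hsymm]; ring
    linarith [h2.trans h3]
  -- Dirac part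
  have hdirac : ∑ x, mu x * (4 * π * ∑ j, (if x = p j then (mu (p j))⁻¹ else 0))
      = 4 * π * N := by
    have h1 : ∀ x, mu x * (4 * π * ∑ j, (if x = p j then (mu (p j))⁻¹ else 0))
        = ∑ j, (if x = p j then 4 * π * (mu x * (mu (p j))⁻¹) else 0) := by
      intro x
      rw [Finset.mul_sum, Finset.mul_sum]
      refine Finset.sum_congr rfl fun j _ => ?_
      by_cases h : x = p j <;> simp [h] <;> ring
    simp_rw [h1]
    rw [Finset.sum_comm]
    have h2 : ∀ j : Fin N,
        ∑ x, (if x = p j then 4 * π * (mu x * (mu (p j))⁻¹) else 0) = 4 * π := by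
      intro j
      rw [Finset.sum_ite_eq' Finset.univ (p j)]
      simp [mul_inv_cancel₀ (hmu (p j)).ne']
    simp_rw [h2]
    simp [Finset.sum_const]
    ring
  have hkey : (0:ℝ) = lam * S + 4 * π * N := by
    calc (0:ℝ) = ∑ x, mu x * ((mu x)⁻¹ * ∑ y, w x y * (u y - u x)) := hlap.symm
      _ = ∑ x, (mu x * (lam * (Real.exp (u x) * (Real.exp (u x) - 1)))
            + mu x * (4 * π * ∑ j, (if x = p j then (mu (p j))⁻¹ else 0))) := by
          refine Finset.sum_congr rfl fun x _ => ?_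
          rw [heq x]; ring
      _ = lam * S + 4 * π * N := by
          rw [Finset.sum_add_distrib, hdirac, hS, Finset.mul_sum]
          congr 1
          exact Finset.sum_congr rfl fun x _ => by ring
  -- bound: e^t (1 - e^t) ≤ 1/4
  have hbound : -S ≤ (∑ z, mu z) / 4 := by
    have : -S = ∑ x, mu x * (Real.exp (u x) * (1 - Real.exp (u x))) := by
      rw [hS, ← Finset.sum_neg_distrib]
      exact Finset.sum_congr rfl fun x _ => by ring
    rw [this, Finset.sum_div]
    refine Finset.sum_le_sum fun x _ => ?_
    have h4 : Real.exp (u x) * (1 - Real.exp (u x)) ≤ 1/4 := by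
      nlinarith [sq_nonneg (Real.exp (u x) - 1/2)]
    have := (hmu x).le
    nlinarith
  have hπ : (0:ℝ) < π := Real.pi_pos
  have hNpos : (0:ℝ) < (N:ℝ) := by exact_mod_cast hN
  rw [ge_iff_le, div_le_iff₀ hTpos]
  nlinarith [mul_le_mul_of_nonneg_left hbound hlam.le]
end

section
/- Monotone iteration decreases: let ψ₀ = -v₀ and define ψ_n by (Δ - K)ψ_n = -λ e^{g(v₀+ψ_{n-1})}(e^{g(v₀+ψ_{n-1})} - 1)² - Kψ_{n-1} + 4πN/|V|, with K > 2λ > 0. Then ψ₁(x) < ψ₀(x) for all x ∈ V. -/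
open Finset Real

theorem stmt_12 {V : Type} [Fintype V] [DecidableEq V] (w : V → V → ℝ) (mu : V → ℝ)
    (hsymm : ∀ x y, w x y = w y x) (hnonneg : ∀ x y, 0 ≤ w x y)
    (hmu : ∀ x, 0 < mu x)
    (hconn : ∀ x y : V, Relation.ReflTransGen (fun a b => 0 < w a b) x y)
    (g : ℝ → ℝ)
    (hg : ∀ t ≤ (0:ℝ), 1 + g t - Real.exp (g t) = t)
    (hgneg : ∀ t ≤ (0:ℝ), g t ≤ 0)
    (N : ℕ) (hN : 0 < N) (p : Fin N → V) (hp : Function.Injective p)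
    (lam K : ℝ) (hlam : 0 < lam) (hK : 2 * lam < K)
    (v0 : V → ℝ)
    (hv0 : ∀ x, (mu x)⁻¹ * ∑ y, w x y * (v0 y - v0 x) =
      -(4 * π * N) / (∑ z, mu z) +
        4 * π * ∑ j, (if x = p j then (mu (p j))⁻¹ else 0))
    (ψ₀ ψ₁ : V → ℝ) (hψ₀ : ψ₀ = fun x => -v0 x)
    (hψ₁ : ∀ x, (mu x)⁻¹ * (∑ y, w x y * (ψ₁ y - ψ₁ x)) - K * ψ₁ x =
      -lam * Real.exp (g (v0 x + ψ₀ x)) * (Real.exp (g (v0 x + ψ₀ x)) - 1) ^ 2 -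
        K * ψ₀ x + 4 * π * N / (∑ z, mu z)) :
    ∀ x, ψ₁ x < ψ₀ x := by
  have hK0 : 0 < K := by linarith
  have hπ : 0 < π := Real.pi_pos
  -- g 0 = 0
  have hg0 : g 0 = 0 := by
    have h1 := hg 0 le_rfl
    by_contra h
    have := Real.add_one_lt_exp h
    linarith
  have hu_ex : ∃ u : V → ℝ, u = fun x => ψ₁ x + v0 x := ⟨_, rfl⟩
  obtain ⟨u, hu_def⟩ := hu_ex
  -- the main PDE for u
  have hu : ∀ x, (mu x)⁻¹ * ∑ y, w x y * (u y - u x) - K * u x =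
      4 * π * ∑ j, (if x = p j then (mu (p j))⁻¹ else 0) := by
    intro x
    have h1 := hψ₁ x
    have h0 : v0 x + ψ₀ x = 0 := by rw [hψ₀]; ring
    rw [h0, hg0, Real.exp_zero] at h1
    rw [hψ₀] at h1
    have h2 := hv0 x
    have hsplit : (∑ y, w x y * (u y - u x)) =
        (∑ y, w x y * (ψ₁ y - ψ₁ x)) + (∑ y, w x y * (v0 y - v0 x)) := by
      rw [← Finset.sum_add_distrib]
      apply Finset.sum_congr rfl
      intro y _
      simp only [hu_def]
      ring
    rw [hsplit, mul_add]
    simp only at h1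
    simp only [hu_def]
    linear_combination h1 + h2
  -- delta term nonneg
  have hδnn : ∀ x, 0 ≤ ∑ j, (if x = p j then (mu (p j))⁻¹ else 0) := by
    intro x
    apply Finset.sum_nonneg
    intro j _
    split
    · exact (inv_nonneg).mpr (hmu _).le
    · exact le_rfl
  -- Laplacian at a max point is nonpositive
  have hΔle : ∀ x, (∀ y, u y ≤ u x) → (mu x)⁻¹ * ∑ y, w x y * (u y - u x) ≤ 0 := by
    intro x hx
    apply mul_nonpos_of_nonneg_of_nonpos ((inv_nonneg).mpr (hmu x).le)
    apply Finset.sum_nonpos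
    intro y _
    exact mul_nonpos_of_nonneg_of_nonpos (hnonneg x y) (sub_nonpos.mpr (hx y))
  -- u ≤ 0
  have hVne : Nonempty V := ⟨p ⟨0, hN⟩⟩
  obtain ⟨x₀, hx₀⟩ := Finite.exists_max u
  have hunp : ∀ x, u x ≤ 0 := by
    have h0 : u x₀ ≤ 0 := by
      by_contra h
      push_neg at h
      have h1 := hu x₀
      have h2 := hΔle x₀ hx₀
      have h3 := hδnn x₀
      have h4 : 0 ≤ 4 * π * ∑ j, (if x₀ = p j then (mu (p j))⁻¹ else 0) :=
        mul_nonneg (by positivity) h3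
      linarith [mul_pos hK0 h]
    exact fun x => (hx₀ x).trans h0
  -- propagation of zeros
  have hstep : ∀ a, u a = 0 → ∀ b, 0 < w a b → u b = 0 := by
    intro a ha b hab
    have hmaxa : ∀ y, u y ≤ u a := fun y => (hunp y).trans_eq ha.symm
    have h1 := hu a
    have hKa : K * u a = 0 := by rw [ha]; ring
    have h2 := hΔle a hmaxa
    have h3 := hδnn a
    have h4 : 0 ≤ 4 * π * ∑ j, (if a = p j then (mu (p j))⁻¹ else 0) :=
      mul_nonneg (by positivity) h3
    have hΔ0 : (mu a)⁻¹ * ∑ y, w a y * (u y - u a) = 0 := by linarith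
    have hsum0 : (∑ y, w a y * (u y - u a)) = 0 := by
      have := (hmu a)
      rcases mul_eq_zero.mp hΔ0 with h | h
      · exact absurd h (inv_ne_zero this.ne')
      · exact h
    have hterm : ∀ y ∈ Finset.univ, w a y * (u y - u a) = 0 := by
      rw [← Finset.sum_eq_zero_iff_of_nonpos]
      · exact hsum0
      · intro y _
        exact mul_nonpos_of_nonneg_of_nonpos (hnonneg a y) (sub_nonpos.mpr (hmaxa y))
    have := hterm b (Finset.mem_univ b)
    rcases mul_eq_zero.mp this with h | h
    · exact absurd h hab.ne'
    · have h5 := sub_eq_zero.mp h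
      rw [ha] at h5
      exact h5
  have hprop : ∀ a b, Relation.ReflTransGen (fun a b => 0 < w a b) a b → u a = 0 → u b = 0 := by
    intro a b hab
    induction hab with
    | refl => exact id
    | tail h1 h2 ih => exact fun ha => hstep _ (ih ha) _ h2
  -- strict negativity
  have hne : ∀ x, u x ≠ 0 := by
    intro x hx
    set q0 : V := p ⟨0, hN⟩ with hq0
    have hq : u q0 = 0 := hprop x q0 (hconn x q0) hx
    have hsum : ∑ j, (if q0 = p j then (mu (p j))⁻¹ else 0) = (mu q0)⁻¹ := by
      rw [Finset.sum_eq_single (⟨0, hN⟩ : Fin N)]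
      · simp [hq0]
      · intro j _ hj
        rw [if_neg]
        intro h
        exact hj (hp h).symm
      · simp
    have h1 := hu q0
    rw [hsum] at h1
    have hKq : K * u q0 = 0 := by rw [hq]; ring
    have hmaxq : ∀ y, u y ≤ u q0 := fun y => (hunp y).trans_eq hq.symm
    have h2 := hΔle q0 hmaxq
    have h4 : 0 < 4 * π * (mu q0)⁻¹ := by
      have h3 : 0 < (mu q0)⁻¹ := inv_pos.mpr (hmu q0)
      positivity
    linarith
  intro x
  have h1 : u x < 0 := lt_of_le_of_ne (hunp x) (hne x)
  rw [hψ₀]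
  simp only [hu_def] at h1
  simp only
  linarith
end

section
/- The solvable set is an upward-closed interval: if the equation Δv = -λ' e^{g(v₀+v)}(e^{g(v₀+v)}-1)² + 4πN/|V| has a solution for some λ' > 0, then for every λ > λ' the equation with λ in place of λ' has a solution; hence Λ = {λ > 0 : the equation is solvable} is an interval unbounded above. -/
/-!
Let `v'` solve the equation for `λ'`, put `c = 4πN/|V|`, and let `G` be a primitive of the
nonlinearity `F(t) = e^{g t} (e^{g t} - 1)²`. Minimise the energy
`E(v) = ¼ Σ_{x,y} w(x,y) (v(y) - v(x))² + Σ_x μ(x) (c v(x) - λ G(v₀(x) + v(x)))`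
over the compact box `v' ≤ v ≤ -v₀`. Varying one vertex at a time, a minimiser satisfies
`Δv ≥ c - λ F(v₀ + v)` where it lies above `v'`, and `Δv ≤ c - λ F(v₀ + v)` where it lies
below `-v₀`. It cannot touch `v'`: there `Δv ≥ Δv' = c - λ' F > c - λ F`. It cannot touch `-v₀`
either: since `F(0) = 0`, the function `v₀ + v ≤ 0` would be subharmonic where it vanishes,
hence identically zero by the strong maximum principle, contradicting the Dirac masses of `Δv₀`
at the vortices. So the minimiser is interior and solves the equation for `λ`.
-/

open Real Set Function Filter Topology

theorem strictMonoOn_one_add_sub_exp : StrictMonoOn (fun s : ℝ => 1 + s - exp s) (Iic 0) := by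
  apply strictMonoOn_of_deriv_pos (convex_Iic 0) (by fun_prop)
  intro s hs
  rw [interior_Iic] at hs
  have hd : HasDerivAt (fun s : ℝ => 1 + s - exp s) (1 - exp s) s :=
    ((hasDerivAt_id s).const_add 1).sub (hasDerivAt_exp s)
  rw [hd.deriv]
  linarith [exp_lt_one_iff.2 hs]

noncomputable def csForce (g : ℝ → ℝ) (t : ℝ) : ℝ := exp (g t) * (exp (g t) - 1) ^ 2

-- `G' = F` because `g' = 1 / (1 - e^g)` on `(-∞, 0)`.
noncomputable def csPrimitive (g : ℝ → ℝ) (t : ℝ) : ℝ := -(exp (g t) - 1) ^ 4 / 4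

section InverseBranch

variable {g : ℝ → ℝ} (hg : ∀ t ≤ (0:ℝ), 1 + g t - exp (g t) = t)

include hg in
theorem g_eq_zero : g 0 = 0 := by
  by_contra h
  linarith [add_one_lt_exp h, hg 0 le_rfl]

include hg in
theorem csForce_zero : csForce g 0 = 0 := by
  simp [csForce, g_eq_zero hg]

variable (hgneg : ∀ t ≤ (0:ℝ), g t ≤ 0)
include hg hgneg

theorem g_neg {t : ℝ} (ht : t < 0) : g t < 0 := by
  refine (hgneg t ht.le).lt_of_ne fun h => ?_
  have := hg t ht.le
  rw [h, exp_zero] at this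
  linarith

theorem g_strictMonoOn : StrictMonoOn g (Iic 0) := by
  intro a ha b hb hab
  by_contra! hba
  have := strictMonoOn_one_add_sub_exp.monotoneOn (hgneg b hb) (hgneg a ha) hba
  simp only [hg a ha, hg b hb] at this
  linarith

theorem g_image_Iic : g '' Iic 0 = Iic 0 := by
  refine Subset.antisymm (image_subset_iff.2 hgneg) fun y (hy : y ≤ 0) => ?_
  have hfy : 1 + y - exp y ≤ 0 := by linarith [add_one_le_exp y]
  exact ⟨_, hfy, strictMonoOn_one_add_sub_exp.injOn (hgneg _ hfy) hy (hg _ hfy)⟩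

theorem g_continuousAt {t : ℝ} (ht : t < 0) : ContinuousAt g t :=
  continuousAt_of_monotoneOn_of_image_mem_nhds (g_strictMonoOn hg hgneg).monotoneOn
    (Iic_mem_nhds ht) (by rw [g_image_Iic hg hgneg]; exact Iic_mem_nhds (g_neg hg hgneg ht))

theorem g_continuousWithinAt_zero : ContinuousWithinAt g (Iic 0) 0 :=
  continuousWithinAt_left_of_monotoneOn_of_image_mem_nhdsWithin
    (g_strictMonoOn hg hgneg).monotoneOn self_mem_nhdsWithin
    (by rw [g_image_Iic hg hgneg, g_eq_zero hg]; exact self_mem_nhdsWithin)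

theorem g_hasDerivAt {t : ℝ} (ht : t < 0) : HasDerivAt g (1 - exp (g t))⁻¹ t := by
  have hexp : exp (g t) < 1 := exp_lt_one_iff.2 (g_neg hg hgneg ht)
  refine HasDerivAt.of_local_left_inverse (g_continuousAt hg hgneg ht)
    (((hasDerivAt_id _).const_add 1).sub (hasDerivAt_exp _)) (by linarith) ?_
  filter_upwards [Iio_mem_nhds ht] with s hs using hg s (le_of_lt hs)

theorem csForce_pos {t : ℝ} (ht : t < 0) : 0 < csForce g t := by
  have hexp : exp (g t) < 1 := exp_lt_one_iff.2 (g_neg hg hgneg ht)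
  exact mul_pos (exp_pos _) (by nlinarith)

theorem hasDerivAt_csPrimitive {t : ℝ} (ht : t < 0) :
    HasDerivAt (csPrimitive g) (csForce g t) t := by
  have hexp : 1 - exp (g t) ≠ 0 := by linarith [exp_lt_one_iff.2 (g_neg hg hgneg ht)]
  have hu := ((hasDerivAt_exp (g t)).comp t (g_hasDerivAt hg hgneg ht)).sub_const 1
  refine ((hu.pow 4).neg.div_const 4).congr_deriv ?_
  simp only [csForce, comp_apply]
  field_simp
  ring

theorem hasDerivWithinAt_csPrimitive {t : ℝ} (ht : t ≤ 0) :
    HasDerivWithinAt (csPrimitive g) (csForce g t) (Iic 0) t := by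
  rcases ht.lt_or_eq with ht | rfl
  · exact (hasDerivAt_csPrimitive hg hgneg ht).hasDerivWithinAt
  have hexp : ContinuousWithinAt (fun t => exp (g t)) (Iic 0) 0 :=
    continuous_exp.continuousAt.comp_continuousWithinAt (g_continuousWithinAt_zero hg hgneg)
  have hforce : Tendsto (csForce g) (𝓝[<] 0) (𝓝 (csForce g 0)) :=
    (hexp.mul ((hexp.sub_const 1).pow 2)).mono_left (nhdsWithin_mono _ Iio_subset_Iic_self)
  refine hasDerivWithinAt_Iic_of_tendsto_deriv (s := Iio 0) ?_ ?_ self_mem_nhdsWithin ?_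
  · exact fun s hs => (hasDerivAt_csPrimitive hg hgneg hs).differentiableAt.differentiableWithinAt
  · exact ContinuousWithinAt.mono (((hexp.sub_const 1).pow 4).neg.div_const 4) Iio_subset_Iic_self
  · refine hforce.congr' ?_
    filter_upwards [self_mem_nhdsWithin] with s hs
    exact (hasDerivAt_csPrimitive hg hgneg hs).deriv.symm

end InverseBranch

section FirstOrder

theorem IsMinOn.update_Icc {ι : Type*} [DecidableEq ι] {E : (ι → ℝ) → ℝ} {a b v : ι → ℝ}
    (hmin : IsMinOn E (Icc a b) v) (hv : v ∈ Icc a b) (x : ι) :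
    IsMinOn (fun t => E (update v x t)) (Icc (a x) (b x)) (v x) := by
  intro t ht
  rw [← pi_univ_Icc] at hv
  have hmem : update v x t ∈ Icc a b := by
    rw [← pi_univ_Icc]; exact (update_mem_pi_iff_of_mem hv).2 fun _ => ht
  show E (update v x (v x)) ≤ E (update v x t)
  rw [update_eq_self]
  exact hmin hmem

variable {φ : ℝ → ℝ} {a b t D : ℝ}

theorem IsMinOn.hasDerivWithinAt_nonneg_of_lt_right (hmin : IsMinOn φ (Icc a b) t)
    (ht : t ∈ Icc a b) (hφ : HasDerivWithinAt φ D (Icc a b) t) (htb : t < b) : 0 ≤ D := by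
  have hcone : b - t ∈ posTangentConeAt (Icc a b) t :=
    sub_mem_posTangentConeAt_of_segment_subset
      ((segment_subset_Icc htb.le).trans (Icc_subset_Icc_left ht.1))
  have := hmin.localize.hasFDerivWithinAt_nonneg hφ.hasFDerivWithinAt hcone
  rw [ContinuousLinearMap.toSpanSingleton_apply, smul_eq_mul] at this
  nlinarith

theorem IsMinOn.hasDerivWithinAt_nonpos_of_left_lt (hmin : IsMinOn φ (Icc a b) t)
    (ht : t ∈ Icc a b) (hφ : HasDerivWithinAt φ D (Icc a b) t) (hat : a < t) : D ≤ 0 := by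
  have hcone : a - t ∈ posTangentConeAt (Icc a b) t :=
    sub_mem_posTangentConeAt_of_segment_subset
      ((segment_symm ℝ t a ▸ segment_subset_Icc hat.le).trans (Icc_subset_Icc_right ht.2))
  have := hmin.localize.hasFDerivWithinAt_nonneg hφ.hasFDerivWithinAt hcone
  rw [ContinuousLinearMap.toSpanSingleton_apply, smul_eq_mul] at this
  nlinarith

end FirstOrder

section Graph

variable {V : Type*} [Fintype V]

noncomputable def graphLaplacian (w : V → V → ℝ) (mu : V → ℝ) (v : V → ℝ) (x : V) : ℝ :=
  (mu x)⁻¹ * ∑ y, w x y * (v y - v x)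

noncomputable def graphEnergy (w : V → V → ℝ) (mu : V → ℝ) (Φ : V → ℝ → ℝ) (v : V → ℝ) : ℝ :=
  (∑ z, ∑ y, w z y * (v y - v z) ^ 2) / 4 + ∑ z, mu z * Φ z (v z)

variable {w : V → V → ℝ} {mu : V → ℝ}

theorem mul_graphLaplacian {x : V} (hmu : mu x ≠ 0) (v : V → ℝ) :
    mu x * graphLaplacian w mu v x = ∑ y, w x y * (v y - v x) := by
  rw [graphLaplacian, ← mul_assoc, mul_inv_cancel₀ hmu, one_mul]

theorem graphLaplacian_le_of_le_of_eq (hnonneg : ∀ x y, 0 ≤ w x y) {x : V} (hmu : 0 < mu x)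
    {u v : V → ℝ} (hle : u ≤ v) (hx : u x = v x) :
    graphLaplacian w mu u x ≤ graphLaplacian w mu v x :=
  mul_le_mul_of_nonneg_left (Finset.sum_le_sum fun y _ =>
    mul_le_mul_of_nonneg_left (by rw [hx]; linarith [hle y]) (hnonneg x y)) (inv_nonneg.2 hmu.le)

theorem strong_maximum_principle (hnonneg : ∀ x y, 0 ≤ w x y)
    (hconn : ∀ x y : V, Relation.ReflTransGen (fun a b => 0 < w a b) x y) {u : V → ℝ}
    (hu : ∀ x, u x ≤ 0) (hsub : ∀ x, u x = 0 → 0 ≤ ∑ y, w x y * (u y - u x))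
    {x : V} (hx : u x = 0) (y : V) : u y = 0 := by
  induction hconn x y with
  | refl => exact hx
  | @tail a b _ hab ha =>
    have hterm : ∀ z ∈ Finset.univ, w a z * (u z - u a) ≤ 0 := fun z _ =>
      mul_nonpos_of_nonneg_of_nonpos (hnonneg a z) (by rw [ha, sub_zero]; exact hu z)
    have hsum := le_antisymm (Finset.sum_nonpos hterm) (hsub a ha)
    have hb := (Finset.sum_eq_zero_iff_of_nonpos hterm).1 hsum b (Finset.mem_univ b)
    rw [ha, sub_zero] at hb
    exact (mul_eq_zero.1 hb).resolve_left hab.ne'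

theorem continuousOn_graphEnergy {Φ : V → ℝ → ℝ} {a b : V → ℝ}
    (hΦ : ∀ z, ContinuousOn (Φ z) (Icc (a z) (b z))) :
    ContinuousOn (graphEnergy w mu Φ) (Icc a b) := by
  refine (Continuous.continuousOn (by fun_prop)).add
    (continuousOn_finsetSum _ fun z _ => continuousOn_const.mul ?_)
  exact (hΦ z).comp (continuous_apply z).continuousOn fun v hv => ⟨hv.1 z, hv.2 z⟩

variable [DecidableEq V]

theorem hasDerivAt_dirichletSum_update (hsymm : ∀ x y, w x y = w y x) (v : V → ℝ) (x : V) :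
    HasDerivAt (fun t => ∑ z, ∑ y, w z y * (update v x t y - update v x t z) ^ 2)
      (4 * ∑ y, w x y * (v x - v y)) (v x) := by
  have hu : ∀ y, HasDerivAt (fun t => update v x t y) ((Pi.single x 1 : V → ℝ) y) (v x) :=
    hasDerivAt_pi.1 (hasDerivAt_update v x (v x))
  have h := HasDerivAt.fun_sum (u := Finset.univ) fun z _ =>
    HasDerivAt.fun_sum (u := Finset.univ) fun y _ =>
      (((hu y).fun_sub (hu z)).fun_pow 2).const_mul (w z y)
  refine h.congr_deriv ?_
  simp only [update_eq_self, Pi.single_apply, mul_sub, mul_ite, mul_one, mul_zero,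
    Finset.sum_sub_distrib, Finset.sum_ite_eq', Finset.sum_ite_irrel, Finset.sum_const_zero,
    Finset.mem_univ, if_true]
  rw [Finset.mul_sum, Finset.mul_sum, ← Finset.sum_sub_distrib, ← Finset.sum_sub_distrib]
  exact Finset.sum_congr rfl fun y _ => by rw [hsymm y x]; ring

theorem sum_mul_update (Φ : V → ℝ → ℝ) (v : V → ℝ) (x : V) (t : ℝ) :
    ∑ z, mu z * Φ z (update v x t z) =
      mu x * Φ x t + ∑ z ∈ Finset.univ \ {x}, mu z * Φ z (v z) := by
  rw [← Finset.sum_update_of_mem (Finset.mem_univ x)]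
  exact Finset.sum_congr rfl fun z _ => (apply_update (fun z s => mu z * Φ z s) v x t z)

theorem hasDerivWithinAt_graphEnergy_update (hsymm : ∀ x y, w x y = w y x) {Φ : V → ℝ → ℝ}
    {v : V → ℝ} {x : V} (hmu : mu x ≠ 0) {s : Set ℝ} {d : ℝ}
    (hΦ : HasDerivWithinAt (Φ x) d s (v x)) :
    HasDerivWithinAt (fun t => graphEnergy w mu Φ (update v x t))
      (mu x * (d - graphLaplacian w mu v x)) s (v x) := by
  have h := ((hasDerivAt_dirichletSum_update hsymm v x).hasDerivWithinAt (s := s)).div_const 4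
    |>.add ((hΦ.const_mul (mu x)).add_const (∑ z ∈ Finset.univ \ {x}, mu z * Φ z (v z)))
  simp only [graphEnergy, sum_mul_update]
  refine h.congr_deriv ?_
  have hneg : ∑ y, w x y * (v x - v y) = -∑ y, w x y * (v y - v x) := by
    rw [← Finset.sum_neg_distrib]
    exact Finset.sum_congr rfl fun _ _ => by ring
  rw [hneg, graphLaplacian]
  field_simp
  ring

variable {Φ : V → ℝ → ℝ} {a b v : V → ℝ} {x : V} {d : ℝ}

theorem IsMinOn.graphLaplacian_le (hsymm : ∀ x y, w x y = w y x) (hmu : 0 < mu x)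
    (hmin : IsMinOn (graphEnergy w mu Φ) (Icc a b) v) (hv : v ∈ Icc a b)
    (hΦ : HasDerivWithinAt (Φ x) d (Icc (a x) (b x)) (v x)) (hb : v x < b x) :
    graphLaplacian w mu v x ≤ d := by
  have := (hmin.update_Icc hv x).hasDerivWithinAt_nonneg_of_lt_right ⟨hv.1 x, hv.2 x⟩
    (hasDerivWithinAt_graphEnergy_update hsymm hmu.ne' hΦ) hb
  nlinarith

theorem IsMinOn.le_graphLaplacian (hsymm : ∀ x y, w x y = w y x) (hmu : 0 < mu x)
    (hmin : IsMinOn (graphEnergy w mu Φ) (Icc a b) v) (hv : v ∈ Icc a b)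
    (hΦ : HasDerivWithinAt (Φ x) d (Icc (a x) (b x)) (v x)) (ha : a x < v x) :
    d ≤ graphLaplacian w mu v x := by
  have := (hmin.update_Icc hv x).hasDerivWithinAt_nonpos_of_left_lt ⟨hv.1 x, hv.2 x⟩
    (hasDerivWithinAt_graphEnergy_update hsymm hmu.ne' hΦ) ha
  nlinarith

end Graph

noncomputable def csPotential {V : Type*} (g : ℝ → ℝ) (lam c : ℝ) (v0 : V → ℝ) (z : V) (s : ℝ) :
    ℝ :=
  c * s - lam * csPrimitive g (v0 z + s)

section ChernSimonsHiggs

variable {V : Type*}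

theorem hasDerivWithinAt_csPotential {g : ℝ → ℝ} (hg : ∀ t ≤ (0:ℝ), 1 + g t - exp (g t) = t)
    (hgneg : ∀ t ≤ (0:ℝ), g t ≤ 0) (lam c : ℝ) {v0 : V → ℝ} {z : V} {s : ℝ}
    (hs : v0 z + s ≤ 0) :
    HasDerivWithinAt (csPotential g lam c v0 z) (c - lam * csForce g (v0 z + s))
      (Iic (-v0 z)) s := by
  have hshift : HasDerivWithinAt (fun s => v0 z + s) 1 (Iic (-v0 z)) s :=
    ((hasDerivAt_id s).const_add (v0 z)).hasDerivWithinAt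
  have hG := (hasDerivWithinAt_csPrimitive hg hgneg hs).comp s hshift
    fun r (hr : r ≤ -v0 z) => show v0 z + r ≤ 0 by linarith
  refine (((hasDerivAt_id s).const_mul c).hasDerivWithinAt.sub (hG.const_mul lam)).congr_deriv ?_
  simp

variable [Fintype V]

theorem exists_isMinOn_graphEnergy_csPotential (w : V → V → ℝ) (mu : V → ℝ) {g : ℝ → ℝ}
    (hg : ∀ t ≤ (0:ℝ), 1 + g t - exp (g t) = t) (hgneg : ∀ t ≤ (0:ℝ), g t ≤ 0) (lam c : ℝ)
    {a v0 : V → ℝ} (ha : ∀ x, v0 x + a x ≤ 0) :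
    ∃ v ∈ Icc a (-v0), IsMinOn (graphEnergy w mu (csPotential g lam c v0)) (Icc a (-v0)) v :=
  isCompact_Icc.exists_isMinOn ⟨a, le_rfl, fun x => show a x ≤ -v0 x by linarith [ha x]⟩ <|
    continuousOn_graphEnergy fun z s hs =>
      (hasDerivWithinAt_csPotential hg hgneg lam c (by linarith [show s ≤ -v0 z from hs.2]))
        |>.continuousWithinAt.mono Icc_subset_Iic_self

variable [DecidableEq V] {w : V → V → ℝ} {mu : V → ℝ}

theorem add_lt_zero_of_vortex {N : ℕ} (hN : 0 < N) (p : Fin N → V)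
    (hnonneg : ∀ x y, 0 ≤ w x y) (hmu : ∀ x, 0 < mu x)
    (hconn : ∀ x y : V, Relation.ReflTransGen (fun a b => 0 < w a b) x y) {v0 : V → ℝ}
    (hv0 : ∀ x, (mu x)⁻¹ * ∑ y, w x y * (v0 y - v0 x) =
      -(4 * π * N) / (∑ z, mu z) +
        4 * π * ∑ j, (if x = p j then (mu (p j))⁻¹ else 0))
    {v : V → ℝ} (hle : ∀ x, v0 x + v x ≤ 0)
    (hcontact : ∀ x, v0 x + v x = 0 → 4 * π * N / (∑ z, mu z) ≤ graphLaplacian w mu v x) :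
    ∀ x, v0 x + v x < 0 := by
  set T : V → ℝ := fun x => ∑ j, if x = p j then (mu (p j))⁻¹ else 0
  have hterm : ∀ x j, 0 ≤ if x = p j then (mu (p j))⁻¹ else 0 := fun x j => by
    split_ifs
    exacts [inv_nonneg.2 (hmu _).le, le_rfl]
  have hT : ∀ x, 0 ≤ T x := fun x => Finset.sum_nonneg fun j _ => hterm x j
  have hTp : 0 < T (p ⟨0, hN⟩) :=
    lt_of_lt_of_le (by simpa using hmu _)
      (Finset.single_le_sum (fun j _ => hterm _ j) (Finset.mem_univ ⟨0, hN⟩))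
  have hvortex : ∀ x, v0 x + v x = 0 →
      4 * π * (mu x * T x) ≤ ∑ y, w x y * ((v0 y + v y) - (v0 x + v x)) := by
    intro x hx
    have hsplit : ∑ y, w x y * ((v0 y + v y) - (v0 x + v x)) =
        mu x * graphLaplacian w mu v0 x + mu x * graphLaplacian w mu v x := by
      rw [mul_graphLaplacian (hmu x).ne', mul_graphLaplacian (hmu x).ne', ← Finset.sum_add_distrib]
      exact Finset.sum_congr rfl fun y _ => by ring
    rw [hsplit, graphLaplacian, hv0 x, neg_div]
    linarith [mul_nonneg (hmu x).le (sub_nonneg.2 (hcontact x hx))]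
  by_contra! hcon
  obtain ⟨x0, hx0⟩ := hcon
  have hzero := strong_maximum_principle hnonneg hconn (u := fun x => v0 x + v x) hle
    (fun x hx => (mul_nonneg (by positivity) (mul_nonneg (hmu x).le (hT x))).trans (hvortex x hx))
    (le_antisymm (hle x0) hx0)
  have := hvortex _ (hzero (p ⟨0, hN⟩))
  simp only [hzero, sub_self, mul_zero, Finset.sum_const_zero] at this
  linarith [mul_pos (by positivity : (0:ℝ) < 4 * π) (mul_pos (hmu (p ⟨0, hN⟩)) hTp)]

end ChernSimonsHiggs

theorem stmt_14_general {V : Type} [Fintype V] [DecidableEq V] (w : V → V → ℝ) (mu : V → ℝ)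
    (hsymm : ∀ x y, w x y = w y x) (hnonneg : ∀ x y, 0 ≤ w x y)
    (hmu : ∀ x, 0 < mu x)
    (hconn : ∀ x y : V, Relation.ReflTransGen (fun a b => 0 < w a b) x y)
    (g : ℝ → ℝ)
    (hg : ∀ t ≤ (0:ℝ), 1 + g t - Real.exp (g t) = t)
    (hgneg : ∀ t ≤ (0:ℝ), g t ≤ 0)
    (N : ℕ) (hN : 0 < N) (p : Fin N → V)
    (v0 : V → ℝ)
    (hv0 : ∀ x, (mu x)⁻¹ * ∑ y, w x y * (v0 y - v0 x) =
      -(4 * π * N) / (∑ z, mu z) +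
        4 * π * ∑ j, (if x = p j then (mu (p j))⁻¹ else 0))
    (lam' : ℝ)
    (hsol : ∃ v : V → ℝ, (∀ x, v0 x + v x < 0) ∧
      ∀ x, (mu x)⁻¹ * ∑ y, w x y * (v y - v x) =
        -lam' * Real.exp (g (v0 x + v x)) * (Real.exp (g (v0 x + v x)) - 1) ^ 2 +
          4 * π * N / (∑ z, mu z)) :
    ∀ lam : ℝ, lam' < lam →
      ∃ v : V → ℝ, (∀ x, v0 x + v x < 0) ∧
        ∀ x, (mu x)⁻¹ * ∑ y, w x y * (v y - v x) =
          -lam * Real.exp (g (v0 x + v x)) * (Real.exp (g (v0 x + v x)) - 1) ^ 2 +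
            4 * π * N / (∑ z, mu z) := by
  intro lam hlam
  obtain ⟨v', hv'neg, hv'eq⟩ := hsol
  set c := 4 * π * N / ∑ z, mu z
  obtain ⟨vs, hvs, hmin⟩ :=
    exists_isMinOn_graphEnergy_csPotential w mu hg hgneg lam c fun x => (hv'neg x).le
  have hle : ∀ x, v0 x + vs x ≤ 0 := fun x => by linarith [show vs x ≤ -v0 x from hvs.2 x]
  have hΦ : ∀ x, HasDerivWithinAt (csPotential g lam c v0 x)
      (c - lam * csForce g (v0 x + vs x)) (Icc (v' x) (-v0 x)) (vs x) := fun x =>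
    (hasDerivWithinAt_csPotential hg hgneg lam c (hle x)).mono Icc_subset_Iic_self
  have hlt : ∀ x, v0 x + vs x < 0 := by
    refine add_lt_zero_of_vortex hN p hnonneg hmu hconn hv0 hle fun x hx => ?_
    have := hmin.le_graphLaplacian hsymm (hmu x) hvs (hΦ x) (by linarith [hv'neg x])
    rwa [hx, csForce_zero hg, mul_zero, sub_zero] at this
  have hsuper : ∀ x, graphLaplacian w mu vs x ≤ c - lam * csForce g (v0 x + vs x) := fun x =>
    hmin.graphLaplacian_le hsymm (hmu x) hvs (hΦ x) (show vs x < -v0 x by linarith [hlt x])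
  have hgt : ∀ x, v' x < vs x := by
    refine fun x => (hvs.1 x).lt_of_ne fun heq => ?_
    have hcomp := graphLaplacian_le_of_le_of_eq hnonneg (hmu x) hvs.1 heq
    have hv'x : graphLaplacian w mu v' x = c - lam' * csForce g (v0 x + vs x) := by
      rw [graphLaplacian, hv'eq x, ← heq, csForce]; ring
    linarith [hsuper x, mul_lt_mul_of_pos_right hlam (csForce_pos hg hgneg (hlt x))]
  refine ⟨vs, hlt, fun x => ?_⟩
  show graphLaplacian w mu vs x = _
  rw [le_antisymm (hsuper x) (hmin.le_graphLaplacian hsymm (hmu x) hvs (hΦ x) (hgt x)), csForce]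
  ring

theorem stmt_14 {V : Type} [Fintype V] [DecidableEq V] (w : V → V → ℝ) (mu : V → ℝ)
    (hsymm : ∀ x y, w x y = w y x) (hnonneg : ∀ x y, 0 ≤ w x y)
    (hmu : ∀ x, 0 < mu x)
    (hconn : ∀ x y : V, Relation.ReflTransGen (fun a b => 0 < w a b) x y)
    (g : ℝ → ℝ)
    (hg : ∀ t ≤ (0:ℝ), 1 + g t - Real.exp (g t) = t)
    (hgneg : ∀ t ≤ (0:ℝ), g t ≤ 0)
    (N : ℕ) (hN : 0 < N) (p : Fin N → V) (hp : Function.Injective p)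
    (v0 : V → ℝ)
    (hv0 : ∀ x, (mu x)⁻¹ * ∑ y, w x y * (v0 y - v0 x) =
      -(4 * π * N) / (∑ z, mu z) +
        4 * π * ∑ j, (if x = p j then (mu (p j))⁻¹ else 0))
    (lam' : ℝ) (hlam' : 0 < lam')
    (hsol : ∃ v : V → ℝ, (∀ x, v0 x + v x < 0) ∧
      ∀ x, (mu x)⁻¹ * ∑ y, w x y * (v y - v x) =
        -lam' * Real.exp (g (v0 x + v x)) * (Real.exp (g (v0 x + v x)) - 1) ^ 2 +
          4 * π * N / (∑ z, mu z)) :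
    ∀ lam : ℝ, lam' < lam →
      ∃ v : V → ℝ, (∀ x, v0 x + v x < 0) ∧
        ∀ x, (mu x)⁻¹ * ∑ y, w x y * (v y - v x) =
          -lam * Real.exp (g (v0 x + v x)) * (Real.exp (g (v0 x + v x)) - 1) ^ 2 +
            4 * π * N / (∑ z, mu z) :=
  stmt_14_general w mu hsymm hnonneg hmu hconn g hg hgneg N hN p v0 hv0 lam' hsol
end

section
/- Monotonicity of maximal solutions: if v_{λ₁} and v_{λ₂} are the maximal solutions of Δv = λ e^{v₀+v}(e^{v₀+v} - 1) + 4πN/|V| for λ₁ > λ₂ > λ_c, then v_{λ₁}(x) > v_{λ₂}(x) for all x ∈ V. -/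
open Finset Real

theorem stmt_16 {V : Type} [Fintype V] (w : V → V → ℝ) (mu : V → ℝ)
    (hsymm : ∀ x y, w x y = w y x) (hnonneg : ∀ x y, 0 ≤ w x y)
    (hmu : ∀ x, 0 < mu x)
    (hconn : ∀ x y : V, Relation.ReflTransGen (fun a b => 0 < w a b) x y)
    (N : ℕ) (hN : 0 < N) (v0 : V → ℝ)
    (lam_c lam₁ lam₂ : ℝ) (h21 : lam₂ < lam₁) (hc2 : lam_c < lam₂) (hc : 0 < lam_c)
    (v₁ v₂ : V → ℝ)
    (hneg₁ : ∀ x, v0 x + v₁ x < 0) (hneg₂ : ∀ x, v0 x + v₂ x < 0)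
    (heq₁ : ∀ x, (mu x)⁻¹ * ∑ y, w x y * (v₁ y - v₁ x) =
      lam₁ * Real.exp (v0 x + v₁ x) * (Real.exp (v0 x + v₁ x) - 1) +
        4 * π * N / (∑ z, mu z))
    (heq₂ : ∀ x, (mu x)⁻¹ * ∑ y, w x y * (v₂ y - v₂ x) =
      lam₂ * Real.exp (v0 x + v₂ x) * (Real.exp (v0 x + v₂ x) - 1) +
        4 * π * N / (∑ z, mu z))
    -- v₁ and v₂ are maximal: they dominate every lower solution at their parameter
    (hmax₁ : ∀ v : V → ℝ,
      (∀ x, (mu x)⁻¹ * ∑ y, w x y * (v y - v x) ≥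
        lam₁ * Real.exp (v0 x + v x) * (Real.exp (v0 x + v x) - 1) +
          4 * π * N / (∑ z, mu z)) → ∀ x, v x ≤ v₁ x)
    (hmax₂ : ∀ v : V → ℝ,
      (∀ x, (mu x)⁻¹ * ∑ y, w x y * (v y - v x) ≥
        lam₂ * Real.exp (v0 x + v x) * (Real.exp (v0 x + v x) - 1) +
          4 * π * N / (∑ z, mu z)) → ∀ x, v x ≤ v₂ x) :
    ∀ x, v₂ x < v₁ x := by
  -- f(s) := e^s (e^s - 1) < 0 for s < 0
  have hf : ∀ s : ℝ, s < 0 → Real.exp s * (Real.exp s - 1) < 0 := by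
    intro s hs
    have h1 : Real.exp s < 1 := by
      simpa using Real.exp_lt_exp.2 hs
    have := Real.exp_pos s
    nlinarith
  -- v₂ is a lower solution for lam₁, hence v₂ ≤ v₁
  have hle : ∀ x, v₂ x ≤ v₁ x := by
    apply hmax₁
    intro x
    have h2 := heq₂ x
    have hneg := hf _ (hneg₂ x)
    rw [h2]
    have : lam₁ * (Real.exp (v0 x + v₂ x) * (Real.exp (v0 x + v₂ x) - 1)) ≤
        lam₂ * (Real.exp (v0 x + v₂ x) * (Real.exp (v0 x + v₂ x) - 1)) := by
      nlinarith
    nlinarith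
  intro x
  rcases lt_or_eq_of_le (hle x) with h | h
  · exact h
  · exfalso
    -- equality at x: compare the two equations at x
    have h1 := heq₁ x
    have h2 := heq₂ x
    have hsum : (mu x)⁻¹ * ∑ y, w x y * (v₁ y - v₁ x) -
        (mu x)⁻¹ * ∑ y, w x y * (v₂ y - v₂ x)
        = (mu x)⁻¹ * ∑ y, w x y * (v₁ y - v₂ y) := by
      rw [← mul_sub, ← Finset.sum_sub_distrib]
      congr 1
      apply Finset.sum_congr rfl
      intro y _
      rw [← h]
      ring
    have hpos : 0 ≤ (mu x)⁻¹ * ∑ y, w x y * (v₁ y - v₂ y) := by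
      apply mul_nonneg (le_of_lt (inv_pos.2 (hmu x)))
      apply Finset.sum_nonneg
      intro y _
      exact mul_nonneg (hnonneg x y) (by linarith [hle y])
    have hneg := hf _ (hneg₂ x)
    rw [h1, h2, show v0 x + v₁ x = v0 x + v₂ x by rw [← h]] at hsum
    nlinarith [hsum, hpos]
end

section
/- A priori gradient bound: if v_λ solves Δv = λ e^{v₀+v}(e^{v₀+v}-1) + 4πN/|V| with v₀ + v_λ < 0, and v_λ = v̄_λ + v'_λ with v̄_λ = (1/|V|)∫_V v_λ dμ, then ‖∇v'_λ‖₂ ≤ Cλ for a constant C depending only on G. -/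
open Finset Real

/-!
Summation by parts turns the equation into
`‖∇v'‖² = -λ ∑ₓ μ(x) v'(x) e^{v₀+v}(e^{v₀+v} - 1)`; the constant `4πN/|V|` drops out because `v'`
has zero mean. On a finite connected graph a zero-mean function takes values of both signs, and
summing edge differences along a path gives `|v'(x)| ≤ K ‖∇v'‖₂`. As `|e^{v₀+v}(e^{v₀+v} - 1)| ≤ 1`,
this yields `‖∇v'‖₂² ≤ C λ ‖∇v'‖₂` with `C` depending on `K` and `|V|` only.
-/

namespace WeightedGraph

variable {V : Type*} [Fintype V]

def energy (w : V → V → ℝ) (f : V → ℝ) : ℝ := ∑ x, ∑ y, w x y * (f y - f x) ^ 2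

noncomputable def laplacian (w : V → V → ℝ) (mu f : V → ℝ) (x : V) : ℝ :=
  (mu x)⁻¹ * ∑ y, w x y * (f y - f x)

variable {w : V → V → ℝ} {mu : V → ℝ}

lemma energy_nonneg (hw : ∀ x y, 0 ≤ w x y) (f : V → ℝ) : 0 ≤ energy w f :=
  sum_nonneg fun x _ => sum_nonneg fun y _ => mul_nonneg (hw x y) (sq_nonneg _)

lemma mul_sq_sub_le_energy (hw : ∀ x y, 0 ≤ w x y) (f : V → ℝ) (x y : V) :
    w x y * (f y - f x) ^ 2 ≤ energy w f :=
  calc w x y * (f y - f x) ^ 2 ≤ ∑ z, w x z * (f z - f x) ^ 2 :=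
        single_le_sum (f := fun z => w x z * (f z - f x) ^ 2)
          (fun z _ => mul_nonneg (hw x z) (sq_nonneg _)) (mem_univ y)
    _ ≤ energy w f :=
        single_le_sum (f := fun a => ∑ z, w a z * (f z - f a) ^ 2)
          (fun a _ => sum_nonneg fun z _ => mul_nonneg (hw a z) (sq_nonneg _)) (mem_univ x)

lemma abs_sub_le_sqrt_energy_of_pos (hw : ∀ x y, 0 ≤ w x y) {x y : V} (hxy : 0 < w x y)
    (f : V → ℝ) : |f y - f x| ≤ √(w x y)⁻¹ * √(energy w f) := by
  rw [← sqrt_mul (by positivity), ← sqrt_sq_eq_abs, inv_mul_eq_div]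
  refine sqrt_le_sqrt ?_
  rw [le_div_iff₀ hxy, mul_comm]
  exact mul_sq_sub_le_energy hw f x y

lemma exists_abs_sub_le_mul_sqrt_energy_of_reflTransGen (hw : ∀ x y, 0 ≤ w x y) {x y : V}
    (h : Relation.ReflTransGen (fun a b => 0 < w a b) x y) :
    ∃ K, 0 ≤ K ∧ ∀ f : V → ℝ, |f y - f x| ≤ K * √(energy w f) := by
  induction h with
  | refl => exact ⟨0, le_rfl, fun f => by simp⟩
  | @tail b c _ hbc ih =>
    obtain ⟨K, hK, hKf⟩ := ih
    refine ⟨K + √(w b c)⁻¹, by positivity, fun f => ?_⟩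
    calc |f c - f x| ≤ |f b - f x| + |f c - f b| := (abs_sub_le _ _ _).trans_eq (add_comm _ _)
      _ ≤ K * √(energy w f) + √(w b c)⁻¹ * √(energy w f) :=
          add_le_add (hKf f) (abs_sub_le_sqrt_energy_of_pos hw hbc f)
      _ = (K + √(w b c)⁻¹) * √(energy w f) := by ring

lemma exists_abs_sub_le_mul_sqrt_energy (hw : ∀ x y, 0 ≤ w x y)
    (hconn : ∀ x y : V, Relation.ReflTransGen (fun a b => 0 < w a b) x y) :
    ∃ K, 0 ≤ K ∧ ∀ (f : V → ℝ) (x y : V), |f y - f x| ≤ K * √(energy w f) := by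
  choose K hK hKf using fun p : V × V =>
    exists_abs_sub_le_mul_sqrt_energy_of_reflTransGen hw (hconn p.1 p.2)
  obtain ⟨K₀, hK₀⟩ := Finite.exists_le K
  refine ⟨max K₀ 0, le_max_right _ _, fun f x y => (hKf (x, y) f).trans ?_⟩
  exact mul_le_mul_of_nonneg_right ((hK₀ (x, y)).trans (le_max_left _ _)) (sqrt_nonneg _)

lemma exists_mul_nonpos_of_sum_mul_eq_zero (hmu : ∀ x, 0 < mu x) {f : V → ℝ}
    (hf : ∑ x, mu x * f x = 0) (x : V) : ∃ y, f x * f y ≤ 0 := by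
  by_contra! hpos
  have : 0 < ∑ y, mu y * (f x * f y) :=
    sum_pos (fun y _ => mul_pos (hmu y) (hpos y)) ⟨x, mem_univ x⟩
  simp only [mul_left_comm (mu _), ← mul_sum, hf, mul_zero, lt_irrefl] at this

/-- A sup-norm Poincaré inequality for functions of weighted mean zero. -/
lemma exists_abs_le_mul_sqrt_energy (hw : ∀ x y, 0 ≤ w x y)
    (hconn : ∀ x y : V, Relation.ReflTransGen (fun a b => 0 < w a b) x y)
    (hmu : ∀ x, 0 < mu x) :
    ∃ K, 0 ≤ K ∧ ∀ f : V → ℝ, ∑ x, mu x * f x = 0 → ∀ x, |f x| ≤ K * √(energy w f) := by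
  obtain ⟨K, hK, hKf⟩ := exists_abs_sub_le_mul_sqrt_energy hw hconn
  refine ⟨K, hK, fun f hf x => ?_⟩
  obtain ⟨y, hxy⟩ := exists_mul_nonpos_of_sum_mul_eq_zero hmu hf x
  have : |f x| ≤ |f x - f y| := by
    cases abs_cases (f x) <;> cases abs_cases (f x - f y) <;> nlinarith
  exact this.trans (abs_sub_comm (f x) (f y) ▸ hKf f x y)

lemma sum_mul_sub_weighted_mean (hmu : ∀ x, 0 < mu x) (v : V → ℝ) :
    ∑ x, mu x * (v x - (∑ s, mu s * v s) / ∑ s, mu s) = 0 := by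
  rcases isEmpty_or_nonempty V with hV | hV
  · simp
  have hM : ∑ s, mu s ≠ 0 := (sum_pos (fun s _ => hmu s) univ_nonempty).ne'
  simp only [mul_sub, sum_sub_distrib, ← sum_mul, mul_div_cancel₀ _ hM, sub_self]

lemma laplacian_sub_const (f : V → ℝ) (c : ℝ) :
    laplacian w mu (fun z => f z - c) = laplacian w mu f := by
  ext x
  simp only [laplacian, sub_sub_sub_cancel_right]

/-- Green's formula. -/
lemma energy_eq_neg_two_mul_sum_laplacian (hsymm : ∀ x y, w x y = w y x)
    (hmu : ∀ x, mu x ≠ 0) (f : V → ℝ) :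
    energy w f = -2 * ∑ x, mu x * f x * laplacian w mu f x := by
  have hswap : ∑ x, ∑ y, w x y * (f y - f x) * f y = -∑ x, ∑ y, w x y * (f y - f x) * f x := by
    rw [sum_comm, ← sum_neg_distrib]
    refine sum_congr rfl fun x _ => ?_
    rw [← sum_neg_distrib]
    refine sum_congr rfl fun y _ => ?_
    rw [hsymm]
    ring
  have hlap : ∀ x, mu x * f x * laplacian w mu f x = ∑ y, w x y * (f y - f x) * f x := by
    intro x
    rw [laplacian, mul_comm (mu x) (f x), mul_assoc, mul_inv_cancel_left₀ (hmu x), mul_comm, sum_mul]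
  calc energy w f
      = ∑ x, ∑ y, (w x y * (f y - f x) * f y - w x y * (f y - f x) * f x) := by
        unfold energy
        exact sum_congr rfl fun x _ => sum_congr rfl fun y _ => by ring
    _ = -2 * ∑ x, ∑ y, w x y * (f y - f x) * f x := by
        simp only [sum_sub_distrib, hswap]
        ring
    _ = -2 * ∑ x, mu x * f x * laplacian w mu f x := by simp only [hlap]

lemma energy_eq_of_laplacian_eq (hsymm : ∀ x y, w x y = w y x) (hmu : ∀ x, mu x ≠ 0)
    {f g : V → ℝ} {lam c : ℝ} (hmean : ∑ x, mu x * f x = 0)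
    (hlap : ∀ x, laplacian w mu f x = lam * g x + c) :
    energy w f = -2 * lam * ∑ x, mu x * f x * g x := by
  simp only [energy_eq_neg_two_mul_sum_laplacian hsymm hmu, hlap, mul_add, sum_add_distrib,
    ← sum_mul, hmean, mul_left_comm _ lam, ← mul_sum]
  ring

lemma neg_sum_mul_mul_le (hmu : ∀ x, 0 < mu x) {f g : V → ℝ} {A : ℝ} (hf : ∀ x, |f x| ≤ A)
    (hg : ∀ x, |g x| ≤ 1) : -∑ x, mu x * f x * g x ≤ (∑ x, mu x) * A := by
  rw [← sum_neg_distrib, sum_mul]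
  refine sum_le_sum fun x _ => ?_
  calc -(mu x * f x * g x) ≤ |mu x * f x * g x| := neg_le_abs _
    _ = mu x * (|f x| * |g x|) := by rw [abs_mul, abs_mul, abs_of_pos (hmu x)]; ring
    _ ≤ mu x * (A * 1) := by gcongr; exacts [(hmu x).le, (abs_nonneg _).trans (hf x), hf x, hg x]
    _ = mu x * A := by rw [mul_one]

lemma sum_mul_half_gradient_sq (hmu : ∀ x, mu x ≠ 0) (f : V → ℝ) :
    ∑ x, mu x * ((2 * mu x)⁻¹ * ∑ y, w x y * (f y - f x) ^ 2) = energy w f / 2 := by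
  rw [energy, sum_div]
  refine sum_congr rfl fun x _ => ?_
  field_simp [hmu x]

end WeightedGraph

lemma abs_exp_mul_exp_sub_one_le {t : ℝ} (ht : t < 0) : |exp t * (exp t - 1)| ≤ 1 := by
  have h0 : 0 < exp t := exp_pos t
  have h1 : exp t < 1 := exp_lt_one_iff.mpr ht
  rw [abs_mul, abs_of_pos h0, abs_of_neg (by linarith)]
  nlinarith

lemma sqrt_le_of_le_mul_sqrt {a b : ℝ} (hb : 0 ≤ b) (h : a ≤ b * √a) : √a ≤ b := by
  rcases (sqrt_nonneg a).eq_or_lt with h0 | h0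
  · exact h0 ▸ hb
  · have ha : 0 ≤ a := sqrt_pos.mp h0 |>.le
    refine le_of_mul_le_mul_right ?_ h0
    rwa [mul_self_sqrt ha]

open WeightedGraph in
theorem stmt_17_general {V : Type} [Fintype V] (w : V → V → ℝ) (mu : V → ℝ)
    (hsymm : ∀ x y, w x y = w y x) (hnonneg : ∀ x y, 0 ≤ w x y)
    (hmu : ∀ x, 0 < mu x)
    (hconn : ∀ x y : V, Relation.ReflTransGen (fun a b => 0 < w a b) x y)
    (N : ℕ) :
    ∃ C : ℝ, 0 < C ∧ ∀ (v0 : V → ℝ) (lam : ℝ) (v : V → ℝ), 0 < lam →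
      (∀ x, v0 x + v x < 0) →
      (∀ x, (mu x)⁻¹ * ∑ y, w x y * (v y - v x) =
        lam * Real.exp (v0 x + v x) * (Real.exp (v0 x + v x) - 1) +
          4 * π * N / (∑ z, mu z)) →
      Real.sqrt (∑ x, mu x * ((2 * mu x)⁻¹ *
          ∑ y, w x y * ((fun z => v z - (∑ s, mu s * v s) / (∑ s, mu s)) y -
            (fun z => v z - (∑ s, mu s * v s) / (∑ s, mu s)) x) ^ 2)) ≤ C * lam := by
  have hmu0 : ∀ x, mu x ≠ 0 := fun x => (hmu x).ne'
  obtain ⟨K, hK, hKf⟩ := exists_abs_le_mul_sqrt_energy hnonneg hconn hmu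
  set M := ∑ z, mu z
  have hM : 0 ≤ M := sum_nonneg fun z _ => (hmu z).le
  refine ⟨2 * M * K + 1, by positivity, fun v0 lam v hlam hneg heq => ?_⟩
  set f := fun z => v z - (∑ s, mu s * v s) / M
  have hmean : ∑ x, mu x * f x = 0 := sum_mul_sub_weighted_mean hmu v
  set E := fun x => exp (v0 x + v x) * (exp (v0 x + v x) - 1)
  have hlap : ∀ x, laplacian w mu f x = lam * E x + 4 * π * N / M := fun x => by
    rw [laplacian_sub_const, laplacian, heq x, mul_assoc]
  have hbound : energy w f ≤ 2 * M * K * lam * √(energy w f) :=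
    calc energy w f = 2 * lam * -∑ x, mu x * f x * E x := by
          rw [energy_eq_of_laplacian_eq hsymm hmu0 hmean hlap]; ring
      _ ≤ 2 * lam * (M * (K * √(energy w f))) := by
          gcongr
          exact neg_sum_mul_mul_le hmu (hKf f hmean) fun x => abs_exp_mul_exp_sub_one_le (hneg x)
      _ = 2 * M * K * lam * √(energy w f) := by ring
  calc √(∑ x, mu x * ((2 * mu x)⁻¹ * ∑ y, w x y * (f y - f x) ^ 2))
      = √(energy w f / 2) := by rw [sum_mul_half_gradient_sq hmu0]
    _ ≤ √(energy w f) := sqrt_le_sqrt (by linarith [energy_nonneg hnonneg f])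
    _ ≤ 2 * M * K * lam := sqrt_le_of_le_mul_sqrt (by positivity) hbound
    _ ≤ (2 * M * K + 1) * lam := by nlinarith

theorem stmt_17 {V : Type} [Fintype V] (w : V → V → ℝ) (mu : V → ℝ)
    (hsymm : ∀ x y, w x y = w y x) (hnonneg : ∀ x y, 0 ≤ w x y)
    (hmu : ∀ x, 0 < mu x)
    (hconn : ∀ x y : V, Relation.ReflTransGen (fun a b => 0 < w a b) x y)
    (N : ℕ) (hN : 0 < N) :
    ∃ C : ℝ, 0 < C ∧ ∀ (v0 : V → ℝ) (lam : ℝ) (v : V → ℝ), 0 < lam →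
      (∀ x, v0 x + v x < 0) →
      (∀ x, (mu x)⁻¹ * ∑ y, w x y * (v y - v x) =
        lam * Real.exp (v0 x + v x) * (Real.exp (v0 x + v x) - 1) +
          4 * π * N / (∑ z, mu z)) →
      Real.sqrt (∑ x, mu x * ((2 * mu x)⁻¹ *
          ∑ y, w x y * ((fun z => v z - (∑ s, mu s * v s) / (∑ s, mu s)) y -
            (fun z => v z - (∑ s, mu s * v s) / (∑ s, mu s)) x) ^ 2)) ≤ C * lam :=
  stmt_17_general w mu hsymm hnonneg hmu hconn N
end

section
/- Existence at the critical parameter: let Λ = {λ > 0 : Δv = λ e^{v₀+v}(e^{v₀+v}-1) + 4πN/|V| has a solution} and λ_c = inf Λ > 0. Suppose for λ ∈ (λ_c, λ_c+1) the maximal solutions v_λ are uniformly bounded in W^{1,2}(V) and monotone increasing in λ. Then the pointwise limit ṽ = lim_{λ→λ_c⁺} v_λ exists and solves the equation with λ = λ_c; in particular λ_c ∈ Λ. -/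
open Finset Real Set Filter Topology

theorem stmt_19 {V : Type} [Fintype V] (w : V → V → ℝ) (mu : V → ℝ)
    (hsymm : ∀ x y, w x y = w y x) (hnonneg : ∀ x y, 0 ≤ w x y)
    (hmu : ∀ x, 0 < mu x)
    (hconn : ∀ x y : V, Relation.ReflTransGen (fun a b => 0 < w a b) x y)
    (N : ℕ) (hN : 0 < N) (v0 : V → ℝ)
    (lam_c : ℝ)
    (hinf : lam_c = sInf {lam : ℝ | 0 < lam ∧ ∃ v : V → ℝ,
      ∀ x, (mu x)⁻¹ * ∑ y, w x y * (v y - v x) =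
        lam * Real.exp (v0 x + v x) * (Real.exp (v0 x + v x) - 1) +
          4 * π * N / (∑ z, mu z)})
    (hc : 0 < lam_c)
    (vfam : ℝ → V → ℝ)
    (hsol : ∀ lam ∈ Set.Ioo lam_c (lam_c + 1),
      ∀ x, (mu x)⁻¹ * ∑ y, w x y * (vfam lam y - vfam lam x) =
        lam * Real.exp (v0 x + vfam lam x) * (Real.exp (v0 x + vfam lam x) - 1) +
          4 * π * N / (∑ z, mu z))
    (hmono : ∀ lam ∈ Set.Ioo lam_c (lam_c + 1), ∀ lam' ∈ Set.Ioo lam_c (lam_c + 1),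
      lam ≤ lam' → ∀ x, vfam lam x ≤ vfam lam' x)
    (hbdd : ∃ M : ℝ, ∀ lam ∈ Set.Ioo lam_c (lam_c + 1),
      ∑ x, mu x * ((2 * mu x)⁻¹ * ∑ y, w x y * (vfam lam y - vfam lam x) ^ 2 +
        (vfam lam x) ^ 2) ≤ M) :
    ∃ vt : V → ℝ,
      (∀ x, Tendsto (fun lam => vfam lam x) (𝓝[>] lam_c) (𝓝 (vt x))) ∧
      (∀ x, (mu x)⁻¹ * ∑ y, w x y * (vt y - vt x) =
        lam_c * Real.exp (v0 x + vt x) * (Real.exp (v0 x + vt x) - 1) +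
          4 * π * N / (∑ z, mu z)) ∧
      lam_c ∈ {lam : ℝ | 0 < lam ∧ ∃ v : V → ℝ,
        ∀ x, (mu x)⁻¹ * ∑ y, w x y * (v y - v x) =
          lam * Real.exp (v0 x + v x) * (Real.exp (v0 x + v x) - 1) +
            4 * π * N / (∑ z, mu z)} := by
  obtain ⟨M, hM⟩ := hbdd
  -- pointwise lower bound
  have hlb : ∀ x, ∀ lam ∈ Set.Ioo lam_c (lam_c + 1),
      -Real.sqrt (M / mu x) ≤ vfam lam x := by
    intro x lam hlam
    have hsum := hM lam hlam
    have hterm : mu x * ((2 * mu x)⁻¹ * ∑ y, w x y * (vfam lam y - vfam lam x) ^ 2 +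
        (vfam lam x) ^ 2) ≤ M := by
      refine le_trans (Finset.single_le_sum (f := fun x => mu x *
        ((2 * mu x)⁻¹ * ∑ y, w x y * (vfam lam y - vfam lam x) ^ 2 + (vfam lam x) ^ 2))
        (fun i _ => ?_) (Finset.mem_univ x)) hsum
      have h1 : (0:ℝ) ≤ ∑ y, w i y * (vfam lam y - vfam lam i) ^ 2 :=
        Finset.sum_nonneg fun y _ => mul_nonneg (hnonneg i y) (sq_nonneg _)
      have h2 : (0:ℝ) ≤ (2 * mu i)⁻¹ := inv_nonneg.mpr (by nlinarith [hmu i])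
      exact mul_nonneg (hmu i).le (add_nonneg (mul_nonneg h2 h1) (sq_nonneg _))
    have hE : (0:ℝ) ≤ (2 * mu x)⁻¹ * ∑ y, w x y * (vfam lam y - vfam lam x) ^ 2 := by
      refine mul_nonneg (inv_nonneg.mpr (by nlinarith [hmu x])) ?_
      exact Finset.sum_nonneg fun y _ => mul_nonneg (hnonneg x y) (sq_nonneg _)
    have hmx := hmu x
    have hv2 : (vfam lam x) ^ 2 ≤ M / mu x := by
      rw [le_div_iff₀ hmx]
      nlinarith
    have hMnn : 0 ≤ M / mu x := le_trans (sq_nonneg _) hv2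
    nlinarith [Real.sq_sqrt hMnn, Real.sqrt_nonneg (M / mu x),
      sq_nonneg (vfam lam x + Real.sqrt (M / mu x))]
  have hne : (Set.Ioo lam_c (lam_c + 1)).Nonempty := by
    exact ⟨lam_c + 1/2, by constructor <;> linarith⟩
  set vt : V → ℝ := fun x => sInf ((fun lam => vfam lam x) '' Set.Ioo lam_c (lam_c + 1))
    with hvt
  have hbb : ∀ x, BddBelow ((fun lam => vfam lam x) '' Set.Ioo lam_c (lam_c + 1)) := by
    intro x
    exact ⟨-Real.sqrt (M / mu x), by rintro _ ⟨lam, hlam, rfl⟩; exact hlb x lam hlam⟩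
  have htend : ∀ x, Tendsto (fun lam => vfam lam x) (𝓝[>] lam_c) (𝓝 (vt x)) := by
    intro x
    exact MonotoneOn.tendsto_nhdsWithin_Ioo_right hne
      (fun a ha b hb hab => hmono a ha b hb hab x) (hbb x)
  have hIoo : Set.Ioo lam_c (lam_c + 1) ∈ 𝓝[>] lam_c :=
    Ioo_mem_nhdsGT_of_mem ⟨le_refl _, by linarith⟩
  have heq : ∀ x, (mu x)⁻¹ * ∑ y, w x y * (vt y - vt x) =
      lam_c * Real.exp (v0 x + vt x) * (Real.exp (v0 x + vt x) - 1) +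
        4 * π * N / (∑ z, mu z) := by
    intro x
    have hL : Tendsto (fun lam => (mu x)⁻¹ * ∑ y, w x y * (vfam lam y - vfam lam x))
        (𝓝[>] lam_c) (𝓝 ((mu x)⁻¹ * ∑ y, w x y * (vt y - vt x))) := by
      refine Tendsto.const_mul _ (tendsto_finset_sum _ fun y _ => ?_)
      exact Tendsto.const_mul _ ((htend y).sub (htend x))
    have hR : Tendsto (fun lam => lam * Real.exp (v0 x + vfam lam x) *
        (Real.exp (v0 x + vfam lam x) - 1) + 4 * π * N / (∑ z, mu z)) (𝓝[>] lam_c)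
        (𝓝 (lam_c * Real.exp (v0 x + vt x) * (Real.exp (v0 x + vt x) - 1) +
          4 * π * N / (∑ z, mu z))) := by
      have hlam : Tendsto (fun lam : ℝ => lam) (𝓝[>] lam_c) (𝓝 lam_c) :=
        tendsto_id.mono_left nhdsWithin_le_nhds
      have hexp : Tendsto (fun lam => Real.exp (v0 x + vfam lam x)) (𝓝[>] lam_c)
          (𝓝 (Real.exp (v0 x + vt x))) :=
        (Real.continuous_exp.continuousAt.tendsto).comp (tendsto_const_nhds.add (htend x))
      exact ((hlam.mul hexp).mul (hexp.sub tendsto_const_nhds)).add tendsto_const_nhds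
    have := tendsto_nhds_unique (hL.congr' ?_) hR
    · exact this
    · filter_upwards [hIoo] with lam hlam
      exact hsol lam hlam x
  refine ⟨vt, htend, heq, hc, vt, heq⟩
end
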